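/- The algebra A_{r,s} is isomorphic to the skew Laurent polynomial ring GL_r(2)[f, f^{-1}; σ], where σ is the algebra automorphism of GL_r(2) = ℂ[a,b,c,d]/(RTT relations for R_r) defined by σ(a) = a, σ(b) = s b, σ(c) = s^{-1} c, σ(d) = d. -/

import Mathlib

open scoped TensorProduct

noncomputable section

/-- Generators of the cross-product algebra `A_{r,s}`. -/
inductive Gen : Type
  | a | b | c | d | f | fi
deriving DecidableEq

/-- The free algebra on the generators. -/
abbrev FA : Type := FreeAlgebra ℂ Gen

/-- The generators inside the free algebra. -/
def X (g : Gen) : FA := FreeAlgebra.ι ℂ g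

/-- The defining relations of `A_{r,s}`. -/
inductive ArsRel (r s : ℂ) : FA → FA → Prop
  | ab : ArsRel r s (X .a * X .b) (r⁻¹ • (X .b * X .a))
  | bd : ArsRel r s (X .b * X .d) (r⁻¹ • (X .d * X .b))
  | ac : ArsRel r s (X .a * X .c) (r⁻¹ • (X .c * X .a))
  | cd : ArsRel r s (X .c * X .d) (r⁻¹ • (X .d * X .c))
  | bc : ArsRel r s (X .b * X .c) (X .c * X .b)
  | ad : ArsRel r s (X .a * X .d - X .d * X .a) ((r⁻¹ - r) • (X .b * X .c))
  | af : ArsRel r s (X .a * X .f) (X .f * X .a)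
  | cf : ArsRel r s (X .c * X .f) (s • (X .f * X .c))
  | bf : ArsRel r s (X .b * X .f) (s⁻¹ • (X .f * X .b))
  | df : ArsRel r s (X .d * X .f) (X .f * X .d)
  | ffi : ArsRel r s (X .f * X .fi) 1
  | fif : ArsRel r s (X .fi * X .f) 1

/-- The cross-product quantum algebra `A_{r,s}`. -/
abbrev Ars (r s : ℂ) : Type := RingQuot (ArsRel r s)

/-- The generators of `A_{r,s}`. -/
def gen (r s : ℂ) (g : Gen) : Ars r s := RingQuot.mkAlgHom ℂ (ArsRel r s) (X g)

/-- Generators of `GL_r(2)`. -/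
inductive Gen4 : Type
  | a | b | c | d
deriving DecidableEq

abbrev FB : Type := FreeAlgebra ℂ Gen4

def Y (g : Gen4) : FB := FreeAlgebra.ι ℂ g

/-- The defining relations of `GL_r(2)`. -/
inductive GLRel (r : ℂ) : FB → FB → Prop
  | ab : GLRel r (Y .a * Y .b) (r⁻¹ • (Y .b * Y .a))
  | bd : GLRel r (Y .b * Y .d) (r⁻¹ • (Y .d * Y .b))
  | ac : GLRel r (Y .a * Y .c) (r⁻¹ • (Y .c * Y .a))
  | cd : GLRel r (Y .c * Y .d) (r⁻¹ • (Y .d * Y .c))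
  | bc : GLRel r (Y .b * Y .c) (Y .c * Y .b)
  | ad : GLRel r (Y .a * Y .d - Y .d * Y .a) ((r⁻¹ - r) • (Y .b * Y .c))

/-- The quantum group(-algebra) `GL_r(2)`. -/
abbrev GL2 (r : ℂ) : Type := RingQuot (GLRel r)

/-- The generators of `GL_r(2)`. -/
def gen4 (r : ℂ) (g : Gen4) : GL2 r := RingQuot.mkAlgHom ℂ (GLRel r) (Y g)

namespace Stmt14Aux

open RingQuot

/-! ### Relations in `GL2 r` -/

lemma gl_ab (r : ℂ) : gen4 r .a * gen4 r .b = r⁻¹ • (gen4 r .b * gen4 r .a) := by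
  simpa [gen4, map_mul, map_smul] using RingQuot.mkAlgHom_rel ℂ (GLRel.ab (r := r))

lemma gl_bd (r : ℂ) : gen4 r .b * gen4 r .d = r⁻¹ • (gen4 r .d * gen4 r .b) := by
  simpa [gen4, map_mul, map_smul] using RingQuot.mkAlgHom_rel ℂ (GLRel.bd (r := r))

lemma gl_ac (r : ℂ) : gen4 r .a * gen4 r .c = r⁻¹ • (gen4 r .c * gen4 r .a) := by
  simpa [gen4, map_mul, map_smul] using RingQuot.mkAlgHom_rel ℂ (GLRel.ac (r := r))

lemma gl_cd (r : ℂ) : gen4 r .c * gen4 r .d = r⁻¹ • (gen4 r .d * gen4 r .c) := by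
  simpa [gen4, map_mul, map_smul] using RingQuot.mkAlgHom_rel ℂ (GLRel.cd (r := r))

lemma gl_bc (r : ℂ) : gen4 r .b * gen4 r .c = gen4 r .c * gen4 r .b := by
  simpa [gen4, map_mul] using RingQuot.mkAlgHom_rel ℂ (GLRel.bc (r := r))

lemma gl_ad (r : ℂ) :
    gen4 r .a * gen4 r .d - gen4 r .d * gen4 r .a = (r⁻¹ - r) • (gen4 r .b * gen4 r .c) := by
  simpa [gen4, map_mul, map_smul, map_sub] using RingQuot.mkAlgHom_rel ℂ (GLRel.ad (r := r))

/-! ### Relations in `Ars r s` -/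

lemma ars_ab (r s : ℂ) : gen r s .a * gen r s .b = r⁻¹ • (gen r s .b * gen r s .a) := by
  simpa [gen, map_mul, map_smul] using RingQuot.mkAlgHom_rel ℂ (ArsRel.ab (r := r) (s := s))

lemma ars_bd (r s : ℂ) : gen r s .b * gen r s .d = r⁻¹ • (gen r s .d * gen r s .b) := by
  simpa [gen, map_mul, map_smul] using RingQuot.mkAlgHom_rel ℂ (ArsRel.bd (r := r) (s := s))

lemma ars_ac (r s : ℂ) : gen r s .a * gen r s .c = r⁻¹ • (gen r s .c * gen r s .a) := by
  simpa [gen, map_mul, map_smul] using RingQuot.mkAlgHom_rel ℂ (ArsRel.ac (r := r) (s := s))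

lemma ars_cd (r s : ℂ) : gen r s .c * gen r s .d = r⁻¹ • (gen r s .d * gen r s .c) := by
  simpa [gen, map_mul, map_smul] using RingQuot.mkAlgHom_rel ℂ (ArsRel.cd (r := r) (s := s))

lemma ars_bc (r s : ℂ) : gen r s .b * gen r s .c = gen r s .c * gen r s .b := by
  simpa [gen, map_mul] using RingQuot.mkAlgHom_rel ℂ (ArsRel.bc (r := r) (s := s))

lemma ars_ad (r s : ℂ) :
    gen r s .a * gen r s .d - gen r s .d * gen r s .a
      = (r⁻¹ - r) • (gen r s .b * gen r s .c) := by
  simpa [gen, map_mul, map_smul, map_sub] using RingQuot.mkAlgHom_rel ℂ (ArsRel.ad (r := r) (s := s))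

lemma ars_af (r s : ℂ) : gen r s .a * gen r s .f = gen r s .f * gen r s .a := by
  simpa [gen, map_mul] using RingQuot.mkAlgHom_rel ℂ (ArsRel.af (r := r) (s := s))

lemma ars_cf (r s : ℂ) : gen r s .c * gen r s .f = s • (gen r s .f * gen r s .c) := by
  simpa [gen, map_mul, map_smul] using RingQuot.mkAlgHom_rel ℂ (ArsRel.cf (r := r) (s := s))

lemma ars_bf (r s : ℂ) : gen r s .b * gen r s .f = s⁻¹ • (gen r s .f * gen r s .b) := by
  simpa [gen, map_mul, map_smul] using RingQuot.mkAlgHom_rel ℂ (ArsRel.bf (r := r) (s := s))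

lemma ars_df (r s : ℂ) : gen r s .d * gen r s .f = gen r s .f * gen r s .d := by
  simpa [gen, map_mul] using RingQuot.mkAlgHom_rel ℂ (ArsRel.df (r := r) (s := s))

lemma ars_ffi (r s : ℂ) : gen r s .f * gen r s .fi = 1 := by
  simpa [gen, map_mul] using RingQuot.mkAlgHom_rel ℂ (ArsRel.ffi (r := r) (s := s))

lemma ars_fif (r s : ℂ) : gen r s .fi * gen r s .f = 1 := by
  simpa [gen, map_mul] using RingQuot.mkAlgHom_rel ℂ (ArsRel.fif (r := r) (s := s))

/-! ### Hom builder for `GL2 r` -/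

def mkGL (r : ℂ) {T : Type} [Ring T] [Algebra ℂ T] (v : Gen4 → T)
    (hab : v .a * v .b = r⁻¹ • (v .b * v .a))
    (hbd : v .b * v .d = r⁻¹ • (v .d * v .b))
    (hac : v .a * v .c = r⁻¹ • (v .c * v .a))
    (hcd : v .c * v .d = r⁻¹ • (v .d * v .c))
    (hbc : v .b * v .c = v .c * v .b)
    (had : v .a * v .d - v .d * v .a = (r⁻¹ - r) • (v .b * v .c)) :
    GL2 r →ₐ[ℂ] T :=
  RingQuot.liftAlgHom ℂ ⟨FreeAlgebra.lift ℂ v, by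
    rintro x y ⟨⟩ <;>
      simp only [Y, map_mul, map_smul, map_sub, FreeAlgebra.lift_ι_apply] <;>
      first
        | exact hab | exact hbd | exact hac | exact hcd | exact hbc | exact had⟩

@[simp] lemma mkGL_gen (r : ℂ) {T : Type} [Ring T] [Algebra ℂ T] (v : Gen4 → T)
    (hab hbd hac hcd hbc had) (g : Gen4) :
    mkGL r v hab hbd hac hcd hbc had (gen4 r g) = v g := by
  rw [mkGL, gen4, RingQuot.liftAlgHom_mkAlgHom_apply, Y, FreeAlgebra.lift_ι_apply]

lemma GL2.homExt {r : ℂ} {T : Type} [Semiring T] [Algebra ℂ T] {f g : GL2 r →ₐ[ℂ] T}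
    (h : ∀ x, f (gen4 r x) = g (gen4 r x)) : f = g := by
  apply RingQuot.ringQuot_ext'
  apply FreeAlgebra.hom_ext
  funext x
  simpa [gen4, Y] using h x

end Stmt14Aux


namespace Stmt14Aux

/-! ### The automorphism σ -/

def sigmaHom (r t u : ℂ) (htu : t * u = 1) (hut : u * t = 1) : GL2 r →ₐ[ℂ] GL2 r :=
  mkGL r
    (fun g => match g with
      | .a => gen4 r .a
      | .b => t • gen4 r .b
      | .c => u • gen4 r .c
      | .d => gen4 r .d)
    (by simp only [mul_smul_comm, smul_mul_assoc, gl_ab r, smul_comm t r⁻¹])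
    (by simp only [mul_smul_comm, smul_mul_assoc, gl_bd r, smul_comm t r⁻¹])
    (by simp only [mul_smul_comm, smul_mul_assoc, gl_ac r, smul_comm u r⁻¹])
    (by simp only [mul_smul_comm, smul_mul_assoc, gl_cd r, smul_comm u r⁻¹])
    (by simp only [mul_smul_comm, smul_mul_assoc, gl_bc r, smul_smul, mul_comm t u])
    (by simp only [mul_smul_comm, smul_mul_assoc, smul_smul, gl_ad r, hut, mul_one])

lemma sigmaHom_comp (r t u : ℂ) (htu : t * u = 1) (hut : u * t = 1) :
    (sigmaHom r t u htu hut).comp (sigmaHom r u t hut htu) = AlgHom.id ℂ (GL2 r) := by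
  apply GL2.homExt
  intro x
  cases x <;>
    simp [sigmaHom, map_smul, smul_smul, htu, hut]

def sigma (r : ℂ) {s : ℂ} (hs : s ≠ 0) : GL2 r ≃ₐ[ℂ] GL2 r :=
  AlgEquiv.ofAlgHom (sigmaHom r s s⁻¹ (mul_inv_cancel₀ hs) (inv_mul_cancel₀ hs))
    (sigmaHom r s⁻¹ s (inv_mul_cancel₀ hs) (mul_inv_cancel₀ hs))
    (sigmaHom_comp r s s⁻¹ (mul_inv_cancel₀ hs) (inv_mul_cancel₀ hs))
    (sigmaHom_comp r s⁻¹ s (inv_mul_cancel₀ hs) (mul_inv_cancel₀ hs))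

@[simp] lemma sigma_a (r : ℂ) {s : ℂ} (hs : s ≠ 0) : sigma r hs (gen4 r .a) = gen4 r .a := by
  simp [sigma, sigmaHom]

@[simp] lemma sigma_b (r : ℂ) {s : ℂ} (hs : s ≠ 0) : sigma r hs (gen4 r .b) = s • gen4 r .b := by
  simp [sigma, sigmaHom]

@[simp] lemma sigma_c (r : ℂ) {s : ℂ} (hs : s ≠ 0) :
    sigma r hs (gen4 r .c) = s⁻¹ • gen4 r .c := by
  simp [sigma, sigmaHom]

@[simp] lemma sigma_d (r : ℂ) {s : ℂ} (hs : s ≠ 0) : sigma r hs (gen4 r .d) = gen4 r .d := by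
  simp [sigma, sigmaHom]

/-! ### The embedding j -/

def jmap (r s : ℂ) : GL2 r →ₐ[ℂ] Ars r s :=
  mkGL r
    (fun g => match g with
      | .a => gen r s .a | .b => gen r s .b | .c => gen r s .c | .d => gen r s .d)
    (ars_ab r s) (ars_bd r s) (ars_ac r s) (ars_cd r s) (ars_bc r s) (ars_ad r s)

@[simp] lemma jmap_a (r s : ℂ) : jmap r s (gen4 r .a) = gen r s .a := by simp [jmap]
@[simp] lemma jmap_b (r s : ℂ) : jmap r s (gen4 r .b) = gen r s .b := by simp [jmap]
@[simp] lemma jmap_c (r s : ℂ) : jmap r s (gen4 r .c) = gen r s .c := by simp [jmap]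
@[simp] lemma jmap_d (r s : ℂ) : jmap r s (gen4 r .d) = gen r s .d := by simp [jmap]

/-! ### The unit F -/

def Fu (r s : ℂ) : (Ars r s)ˣ where
  val := gen r s .f
  inv := gen r s .fi
  val_inv := ars_ffi r s
  inv_val := ars_fif r s

@[simp] lemma Fu_val (r s : ℂ) : ((Fu r s : (Ars r s)ˣ) : Ars r s) = gen r s .f := rfl
@[simp] lemma Fu_inv_val (r s : ℂ) : (((Fu r s)⁻¹ : (Ars r s)ˣ) : Ars r s) = gen r s .fi := rfl

/-! ### Conjugation by a unit as an algebra hom -/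

def conjU {A : Type} [Ring A] [Algebra ℂ A] (u : Aˣ) : A →ₐ[ℂ] A :=
  AlgHom.mk'
    { toFun := fun x => ↑u * x * ↑u⁻¹
      map_one' := by simp
      map_mul' := fun x y => by
        simp [mul_assoc, Units.inv_mul_cancel_left]
      map_zero' := by simp
      map_add' := fun x y => by simp [mul_add, add_mul] }
    (fun c x => by simp [mul_smul_comm, smul_mul_assoc])

@[simp] lemma conjU_apply {A : Type} [Ring A] [Algebra ℂ A] (u : Aˣ) (x : A) :
    conjU u x = ↑u * x * ↑u⁻¹ := rfl

/-! ### The skew relation -/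

lemma skew (r : ℂ) {s : ℂ} (hs : s ≠ 0) (x : GL2 r) :
    (Fu r s : Ars r s) * jmap r s x = jmap r s (sigma r hs x) * (Fu r s : Ars r s) := by
  have h : (conjU (Fu r s)).comp (jmap r s) = (jmap r s).comp (sigma r hs).toAlgHom := by
    apply GL2.homExt
    intro g
    cases g
    · -- a
      simp only [AlgHom.comp_apply, AlgEquiv.toAlgHom_eq_coe, AlgHom.coe_coe, AlgEquiv.coe_toAlgHom, sigma_a r hs,
        jmap_a, conjU_apply, Fu_val, Fu_inv_val]
      rw [← ars_af r s, mul_assoc, ars_ffi r s, mul_one]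
    · -- b
      simp only [AlgHom.comp_apply, AlgEquiv.toAlgHom_eq_coe, AlgHom.coe_coe, AlgEquiv.coe_toAlgHom, sigma_b r hs,
        jmap_b, conjU_apply, Fu_val, Fu_inv_val, map_smul]
      have hfb : gen r s .f * gen r s .b = s • (gen r s .b * gen r s .f) := by
        rw [ars_bf r s, smul_smul, mul_inv_cancel₀ hs, one_smul]
      rw [hfb, smul_mul_assoc, mul_assoc, ars_ffi r s, mul_one]
    · -- c
      simp only [AlgHom.comp_apply, AlgEquiv.toAlgHom_eq_coe, AlgHom.coe_coe, AlgEquiv.coe_toAlgHom, sigma_c r hs,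
        jmap_c, conjU_apply, Fu_val, Fu_inv_val, map_smul]
      have hfc : gen r s .f * gen r s .c = s⁻¹ • (gen r s .c * gen r s .f) := by
        rw [ars_cf r s, smul_smul, inv_mul_cancel₀ hs, one_smul]
      rw [hfc, smul_mul_assoc, mul_assoc, ars_ffi r s, mul_one]
    · -- d
      simp only [AlgHom.comp_apply, AlgEquiv.toAlgHom_eq_coe, AlgHom.coe_coe, AlgEquiv.coe_toAlgHom, sigma_d r hs,
        jmap_d, conjU_apply, Fu_val, Fu_inv_val]
      rw [← ars_df r s, mul_assoc, ars_ffi r s, mul_one]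
  have h2 := congrArg (fun φ => φ x) h
  simp only [AlgHom.comp_apply, AlgEquiv.toAlgHom_eq_coe, AlgHom.coe_coe, AlgEquiv.coe_toAlgHom, conjU_apply] at h2
  calc (Fu r s : Ars r s) * jmap r s x
      = (↑(Fu r s) * jmap r s x * ↑(Fu r s)⁻¹) * ↑(Fu r s) := by
        rw [mul_assoc, Units.inv_mul, mul_one]
    _ = jmap r s (sigma r hs x) * ↑(Fu r s) := by rw [h2]

lemma skewInv (r : ℂ) {s : ℂ} (hs : s ≠ 0) (x : GL2 r) :
    ((Fu r s)⁻¹ : (Ars r s)ˣ) * jmap r s x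
      = jmap r s ((sigma r hs).symm x) * ((Fu r s)⁻¹ : (Ars r s)ˣ) := by
  have h := skew r hs ((sigma r hs).symm x)
  rw [AlgEquiv.apply_symm_apply] at h
  calc (((Fu r s)⁻¹ : (Ars r s)ˣ) : Ars r s) * jmap r s x
      = ↑(Fu r s)⁻¹ * (jmap r s x * ↑(Fu r s) * ↑(Fu r s)⁻¹) := by
        rw [mul_assoc (jmap r s x), Units.mul_inv, mul_one]
    _ = ↑(Fu r s)⁻¹ * (↑(Fu r s) * jmap r s ((sigma r hs).symm x) * ↑(Fu r s)⁻¹) := by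
        rw [← h]
    _ = jmap r s ((sigma r hs).symm x) * ↑(Fu r s)⁻¹ := by
        rw [← mul_assoc, ← mul_assoc, Units.inv_mul, one_mul]

lemma aut_inv_apply {r : ℂ} (e : GL2 r ≃ₐ[ℂ] GL2 r) (x : GL2 r) : (e⁻¹) x = e.symm x := rfl

lemma skewZ (r : ℂ) {s : ℂ} (hs : s ≠ 0) (n : ℤ) : ∀ x : GL2 r,
    ((Fu r s ^ n : (Ars r s)ˣ) : Ars r s) * jmap r s x
      = jmap r s ((sigma r hs ^ n) x) * ((Fu r s ^ n : (Ars r s)ˣ) : Ars r s) := by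
  induction n using Int.induction_on with
  | zero => intro x; simp
  | succ n ih =>
      intro x
      have h1 : (Fu r s) ^ ((n : ℤ) + 1) = (Fu r s) ^ (n : ℤ) * Fu r s := by
        rw [zpow_add_one]
      have h2 : (sigma r hs) ^ ((n : ℤ) + 1) = (sigma r hs) ^ (n : ℤ) * sigma r hs := by
        rw [zpow_add_one]
      rw [h1, h2, Units.val_mul, mul_assoc, skew r hs x, ← mul_assoc, ih (sigma r hs x),
        mul_assoc, AlgEquiv.mul_apply]
  | pred n ih =>
      intro x
      have h1 : (Fu r s) ^ (-(n : ℤ) - 1) = (Fu r s) ^ (-(n : ℤ)) * (Fu r s)⁻¹ := by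
        rw [zpow_sub_one]
      have h2 : (sigma r hs) ^ (-(n : ℤ) - 1) = (sigma r hs) ^ (-(n : ℤ)) * (sigma r hs)⁻¹ := by
        rw [zpow_sub_one]
      rw [h1, h2, Units.val_mul, mul_assoc, skewInv r hs x, ← mul_assoc,
        ih ((sigma r hs).symm x), mul_assoc, AlgEquiv.mul_apply, aut_inv_apply]

end Stmt14Aux


namespace Stmt14Aux

/-! ### The module `⊕ₙ GL2 r · fⁿ` -/

abbrev MM (r : ℂ) : Type := ℤ →₀ GL2 r

noncomputable instance endRing (r : ℂ) : Ring (Module.End ℂ (MM r)) :=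
  Module.End.instRing (R := ℂ) (N₁ := MM r)

def mulOp (r : ℂ) (x : GL2 r) : MM r →ₗ[ℂ] MM r :=
  Finsupp.mapRange.linearMap (LinearMap.mulLeft ℂ x)

@[simp] lemma mulOp_single (r : ℂ) (x : GL2 r) (n : ℤ) (y : GL2 r) :
    mulOp r x (Finsupp.single n y) = Finsupp.single n (x * y) := by
  simp only [mulOp, Finsupp.mapRange.linearMap_apply, Finsupp.mapRange_single,
    LinearMap.mulLeft_apply]

def shOp (r : ℂ) (e : GL2 r ≃ₐ[ℂ] GL2 r) (k : ℤ) : MM r →ₗ[ℂ] MM r :=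
  (Finsupp.lmapDomain (GL2 r) ℂ (· + k)).comp (Finsupp.mapRange.linearMap e.toLinearMap)

@[simp] lemma shOp_single (r : ℂ) (e : GL2 r ≃ₐ[ℂ] GL2 r) (k : ℤ) (n : ℤ) (y : GL2 r) :
    shOp r e k (Finsupp.single n y) = Finsupp.single (n + k) (e y) := by
  simp only [shOp, LinearMap.coe_comp, Function.comp_apply, Finsupp.mapRange.linearMap_apply,
    Finsupp.mapRange_single, AlgEquiv.toLinearMap_apply, Finsupp.lmapDomain_apply,
    Finsupp.mapDomain_single]

/-! ### Operator relations -/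

lemma e_ab (r : ℂ) : mulOp r (gen4 r .a) * mulOp r (gen4 r .b)
    = r⁻¹ • (mulOp r (gen4 r .b) * mulOp r (gen4 r .a)) := by
  apply Finsupp.lhom_ext; intro n z
  simp only [Module.End.mul_apply, LinearMap.smul_apply, mulOp_single, Finsupp.smul_single,
    ← mul_assoc]
  rw [gl_ab r, smul_mul_assoc]

lemma e_bd (r : ℂ) : mulOp r (gen4 r .b) * mulOp r (gen4 r .d)
    = r⁻¹ • (mulOp r (gen4 r .d) * mulOp r (gen4 r .b)) := by
  apply Finsupp.lhom_ext; intro n z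
  simp only [Module.End.mul_apply, LinearMap.smul_apply, mulOp_single, Finsupp.smul_single,
    ← mul_assoc]
  rw [gl_bd r, smul_mul_assoc]

lemma e_ac (r : ℂ) : mulOp r (gen4 r .a) * mulOp r (gen4 r .c)
    = r⁻¹ • (mulOp r (gen4 r .c) * mulOp r (gen4 r .a)) := by
  apply Finsupp.lhom_ext; intro n z
  simp only [Module.End.mul_apply, LinearMap.smul_apply, mulOp_single, Finsupp.smul_single,
    ← mul_assoc]
  rw [gl_ac r, smul_mul_assoc]

lemma e_cd (r : ℂ) : mulOp r (gen4 r .c) * mulOp r (gen4 r .d)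
    = r⁻¹ • (mulOp r (gen4 r .d) * mulOp r (gen4 r .c)) := by
  apply Finsupp.lhom_ext; intro n z
  simp only [Module.End.mul_apply, LinearMap.smul_apply, mulOp_single, Finsupp.smul_single,
    ← mul_assoc]
  rw [gl_cd r, smul_mul_assoc]

lemma e_bc (r : ℂ) : mulOp r (gen4 r .b) * mulOp r (gen4 r .c)
    = mulOp r (gen4 r .c) * mulOp r (gen4 r .b) := by
  apply Finsupp.lhom_ext; intro n z
  simp only [Module.End.mul_apply, mulOp_single, ← mul_assoc]
  rw [gl_bc r]

lemma e_ad (r : ℂ) : mulOp r (gen4 r .a) * mulOp r (gen4 r .d)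
    = (r⁻¹ - r) • (mulOp r (gen4 r .b) * mulOp r (gen4 r .c))
      + mulOp r (gen4 r .d) * mulOp r (gen4 r .a) := by
  have hgl : gen4 r .a * gen4 r .d
      = (r⁻¹ - r) • (gen4 r .b * gen4 r .c) + gen4 r .d * gen4 r .a := by
    rw [← gl_ad r, sub_add_cancel]
  apply Finsupp.lhom_ext; intro n z
  simp only [Module.End.mul_apply, LinearMap.add_apply, LinearMap.smul_apply, mulOp_single,
    Finsupp.smul_single, ← Finsupp.single_add, ← mul_assoc]
  rw [hgl, add_mul, smul_mul_assoc]

lemma e_af (r : ℂ) {s : ℂ} (hs : s ≠ 0) :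
    mulOp r (gen4 r .a) * shOp r (sigma r hs) 1
      = shOp r (sigma r hs) 1 * mulOp r (gen4 r .a) := by
  apply Finsupp.lhom_ext; intro n z
  simp only [Module.End.mul_apply, mulOp_single, shOp_single, map_mul, sigma_a]

lemma e_cf (r : ℂ) {s : ℂ} (hs : s ≠ 0) :
    mulOp r (gen4 r .c) * shOp r (sigma r hs) 1
      = s • (shOp r (sigma r hs) 1 * mulOp r (gen4 r .c)) := by
  apply Finsupp.lhom_ext; intro n z
  simp only [Module.End.mul_apply, LinearMap.smul_apply, mulOp_single, shOp_single, map_mul,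
    sigma_c, Finsupp.smul_single, smul_mul_assoc, smul_smul, mul_inv_cancel₀ hs, one_smul]

lemma e_bf (r : ℂ) {s : ℂ} (hs : s ≠ 0) :
    mulOp r (gen4 r .b) * shOp r (sigma r hs) 1
      = s⁻¹ • (shOp r (sigma r hs) 1 * mulOp r (gen4 r .b)) := by
  apply Finsupp.lhom_ext; intro n z
  simp only [Module.End.mul_apply, LinearMap.smul_apply, mulOp_single, shOp_single, map_mul,
    sigma_b, Finsupp.smul_single, smul_mul_assoc, smul_smul, inv_mul_cancel₀ hs, one_smul]

lemma e_df (r : ℂ) {s : ℂ} (hs : s ≠ 0) :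
    mulOp r (gen4 r .d) * shOp r (sigma r hs) 1
      = shOp r (sigma r hs) 1 * mulOp r (gen4 r .d) := by
  apply Finsupp.lhom_ext; intro n z
  simp only [Module.End.mul_apply, mulOp_single, shOp_single, map_mul, sigma_d]

lemma e_ffi (r : ℂ) {s : ℂ} (hs : s ≠ 0) :
    shOp r (sigma r hs) 1 * shOp r (sigma r hs).symm (-1) = 1 := by
  apply Finsupp.lhom_ext; intro n z
  simp only [Module.End.mul_apply, shOp_single, AlgEquiv.apply_symm_apply, Module.End.one_apply]
  congr 1
  ring

lemma e_fif (r : ℂ) {s : ℂ} (hs : s ≠ 0) :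
    shOp r (sigma r hs).symm (-1) * shOp r (sigma r hs) 1 = 1 := by
  apply Finsupp.lhom_ext; intro n z
  simp only [Module.End.mul_apply, shOp_single, AlgEquiv.symm_apply_apply, Module.End.one_apply]
  congr 1
  ring

/-! ### The representation ρ -/

def vmap (r : ℂ) {s : ℂ} (hs : s ≠ 0) : Gen → Module.End ℂ (MM r) := fun g =>
  match g with
  | .a => mulOp r (gen4 r .a)
  | .b => mulOp r (gen4 r .b)
  | .c => mulOp r (gen4 r .c)
  | .d => mulOp r (gen4 r .d)
  | .f => shOp r (sigma r hs) 1
  | .fi => shOp r (sigma r hs).symm (-1)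

def rho (r : ℂ) {s : ℂ} (hs : s ≠ 0) : Ars r s →ₐ[ℂ] Module.End ℂ (MM r) :=
  RingQuot.liftAlgHom ℂ ⟨FreeAlgebra.lift ℂ (vmap r hs), by
    rintro x y ⟨⟩ <;>
      simp only [X, map_mul, map_smul, map_sub, map_one, FreeAlgebra.lift_ι_apply] <;>
      first
        | exact e_ab r | exact e_bd r | exact e_ac r | exact e_cd r | exact e_bc r
        | (rw [sub_eq_iff_eq_add]; exact e_ad r)
        | exact e_af r hs | exact e_cf r hs | exact e_bf r hs
        | exact e_df r hs | exact e_ffi r hs | exact e_fif r hs⟩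

@[simp] lemma rho_gen (r : ℂ) {s : ℂ} (hs : s ≠ 0) (g : Gen) :
    rho r hs (gen r s g) = vmap r hs g := by
  rw [rho, gen, RingQuot.liftAlgHom_mkAlgHom_apply, X, FreeAlgebra.lift_ι_apply]

def mulHom (r : ℂ) : GL2 r →ₐ[ℂ] Module.End ℂ (MM r) where
  toFun := mulOp r
  map_one' := by
    apply Finsupp.lhom_ext; intro n z
    simp only [mulOp_single, one_mul, Module.End.one_apply]
  map_mul' := fun x y => by
    apply Finsupp.lhom_ext; intro n z
    simp only [mulOp_single, Module.End.mul_apply, mul_assoc]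
  map_zero' := by
    apply Finsupp.lhom_ext; intro n z
    simp only [mulOp_single, zero_mul, Finsupp.single_zero, LinearMap.zero_apply]
  map_add' := fun x y => by
    apply Finsupp.lhom_ext; intro n z
    simp only [mulOp_single, LinearMap.add_apply, add_mul, Finsupp.single_add]
  commutes' := fun c => by
    apply Finsupp.lhom_ext; intro n z
    simp only [mulOp_single, Module.algebraMap_end_apply, Finsupp.smul_single, Algebra.smul_def]

@[simp] lemma mulHom_apply (r : ℂ) (x : GL2 r) : mulHom r x = mulOp r x := rfl

lemma rho_jmap (r : ℂ) {s : ℂ} (hs : s ≠ 0) (x : GL2 r) :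
    rho r hs (jmap r s x) = mulOp r x := by
  have hcomp : (rho r hs).comp (jmap r s) = mulHom r := by
    apply GL2.homExt
    intro g
    cases g <;> simp [vmap]
  calc rho r hs (jmap r s x) = ((rho r hs).comp (jmap r s)) x := rfl
    _ = mulOp r x := by rw [hcomp]; rfl

/-! ### Powers of F under ρ -/

lemma rho_pow_single (r : ℂ) {s : ℂ} (hs : s ≠ 0) (n : ℤ) : ∀ (m : ℤ) (z : GL2 r),
    rho r hs ((Fu r s ^ n : (Ars r s)ˣ) : Ars r s) (Finsupp.single m z)
      = Finsupp.single (m + n) ((sigma r hs ^ n) z) := by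
  have key : ∀ (k : ℤ), rho r hs ((Fu r s ^ k : (Ars r s)ˣ) : Ars r s)
      = ((Units.map (rho r hs : Ars r s →* Module.End ℂ (MM r)) (Fu r s) ^ k : _ˣ) :
          Module.End ℂ (MM r)) := by
    intro k
    rw [← map_zpow, Units.coe_map]
    rfl
  have hF : ((Units.map (rho r hs : Ars r s →* Module.End ℂ (MM r)) (Fu r s) : _ˣ) :
      Module.End ℂ (MM r)) = shOp r (sigma r hs) 1 := by
    rw [Units.coe_map]
    show rho r hs (gen r s .f) = _
    rw [rho_gen]
    rfl
  have hFi : (((Units.map (rho r hs : Ars r s →* Module.End ℂ (MM r)) (Fu r s))⁻¹ : _ˣ) :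
      Module.End ℂ (MM r)) = shOp r (sigma r hs).symm (-1) := by
    rw [← map_inv, Units.coe_map]
    show rho r hs (gen r s .fi) = _
    rw [rho_gen]
    rfl
  simp only [key]
  induction n using Int.induction_on with
  | zero => intro m z; simp
  | succ n ih =>
      intro m z
      rw [zpow_add_one, Units.val_mul, Module.End.mul_apply, hF, shOp_single,
        ih (m + 1) (sigma r hs z), zpow_add_one, AlgEquiv.mul_apply]
      congr 1
      ring
  | pred n ih =>
      intro m z
      rw [zpow_sub_one, Units.val_mul, Module.End.mul_apply, hFi, shOp_single,
        ih (m + -1) ((sigma r hs).symm z), zpow_sub_one, AlgEquiv.mul_apply, aut_inv_apply]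
      congr 1
      ring

end Stmt14Aux


namespace Stmt14Aux

/-! ### The comparison map Φ -/

def PhiL (r s : ℂ) : (ℤ →₀ GL2 r) →ₗ[ℂ] Ars r s :=
  Finsupp.lsum ℂ fun n =>
    (LinearMap.mulRight ℂ ((Fu r s ^ n : (Ars r s)ˣ) : Ars r s)).comp (jmap r s).toLinearMap

lemma PhiL_apply (r s : ℂ) (p : ℤ →₀ GL2 r) :
    PhiL r s p = p.sum fun n x => jmap r s x * ((Fu r s ^ n : (Ars r s)ˣ) : Ars r s) := by
  rw [PhiL, Finsupp.lsum_apply]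
  rfl

lemma PhiL_single (r s : ℂ) (m : ℤ) (x : GL2 r) :
    PhiL r s (Finsupp.single m x)
      = jmap r s x * ((Fu r s ^ m : (Ars r s)ˣ) : Ars r s) := by
  rw [PhiL_apply, Finsupp.sum_single_index]
  simp

/-! ### Injectivity -/

lemma rho_PhiL (r : ℂ) {s : ℂ} (hs : s ≠ 0) (p : ℤ →₀ GL2 r) :
    rho r hs (PhiL r s p) (Finsupp.single (0 : ℤ) (1 : GL2 r)) = p := by
  have happ : ∀ (q : ℤ →₀ GL2 r) (g : ℤ → GL2 r → Module.End ℂ (MM r)) (v : MM r),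
      (q.sum g) v = q.sum fun n x => g n x v := by
    intro q g v
    classical
    rw [Finsupp.sum, Finsupp.sum, LinearMap.sum_apply]
  have hterm : ∀ (n : ℤ) (x : GL2 r),
      rho r hs (jmap r s x * ((Fu r s ^ n : (Ars r s)ˣ) : Ars r s))
        (Finsupp.single (0 : ℤ) (1 : GL2 r)) = Finsupp.single n x := by
    intro n x
    rw [map_mul, Module.End.mul_apply, rho_pow_single r hs n 0 1, rho_jmap r hs,
      mulOp_single, map_one, mul_one, zero_add]
  rw [PhiL_apply, map_finsuppSum, happ]
  calc (p.sum fun n x => rho r hs (jmap r s x * ((Fu r s ^ n : (Ars r s)ˣ) : Ars r s))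
          (Finsupp.single (0 : ℤ) (1 : GL2 r)))
      = p.sum fun n x => Finsupp.single n x := by
        apply Finsupp.sum_congr
        intro n _
        exact hterm n (p n)
    _ = p := Finsupp.sum_single p

lemma PhiL_injective (r : ℂ) {s : ℂ} (hs : s ≠ 0) : Function.Injective (PhiL r s) := by
  intro p q h
  have h2 : rho r hs (PhiL r s p) (Finsupp.single (0 : ℤ) (1 : GL2 r))
      = rho r hs (PhiL r s q) (Finsupp.single (0 : ℤ) (1 : GL2 r)) := by rw [h]
  rwa [rho_PhiL r hs, rho_PhiL r hs] at h2

/-! ### Surjectivity -/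

lemma mono_mul (r : ℂ) {s : ℂ} (hs : s ≠ 0) (m n : ℤ) (x y : GL2 r) :
    (jmap r s x * ((Fu r s ^ m : (Ars r s)ˣ) : Ars r s))
        * (jmap r s y * ((Fu r s ^ n : (Ars r s)ˣ) : Ars r s))
      = jmap r s (x * (sigma r hs ^ m) y)
          * ((Fu r s ^ (m + n) : (Ars r s)ˣ) : Ars r s) := by
  rw [mul_assoc (jmap r s x), ← mul_assoc ((Fu r s ^ m : (Ars r s)ˣ) : Ars r s),
    skewZ r hs m y, mul_assoc (jmap r s ((sigma r hs ^ m) y)), ← Units.val_mul, ← zpow_add,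
    ← mul_assoc, ← map_mul]

lemma mul_mem_range (r : ℂ) {s : ℂ} (hs : s ≠ 0) (p q : ℤ →₀ GL2 r) :
    PhiL r s p * PhiL r s q ∈ LinearMap.range (PhiL r s) := by
  induction p using Finsupp.induction_linear with
  | zero => simp
  | add f g hf hg => rw [map_add, add_mul]; exact add_mem hf hg
  | single m x =>
      rw [PhiL_single, PhiL_apply, Finsupp.mul_sum]
      apply Submodule.finsuppSum_mem
      intro n _
      rw [mono_mul r hs m n x (q n)]
      exact ⟨Finsupp.single (m + n) (x * (sigma r hs ^ m) (q n)), PhiL_single r s _ _⟩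

lemma one_mem_range (r s : ℂ) : (1 : Ars r s) ∈ LinearMap.range (PhiL r s) := by
  refine ⟨Finsupp.single 0 1, ?_⟩
  rw [PhiL_single]
  simp

lemma range_top (r : ℂ) {s : ℂ} (hs : s ≠ 0) (z : Ars r s) :
    z ∈ LinearMap.range (PhiL r s) := by
  obtain ⟨w, rfl⟩ := RingQuot.mkAlgHom_surjective ℂ (ArsRel r s) z
  induction w using FreeAlgebra.induction with
  | grade0 c =>
      rw [AlgHom.commutes, Algebra.algebraMap_eq_smul_one]
      exact Submodule.smul_mem _ c (one_mem_range r s)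
  | grade1 g =>
      have hgen : RingQuot.mkAlgHom ℂ (ArsRel r s) (FreeAlgebra.ι ℂ g) = gen r s g := rfl
      rw [hgen]
      cases g with
      | a => exact ⟨Finsupp.single 0 (gen4 r .a), by rw [PhiL_single]; simp⟩
      | b => exact ⟨Finsupp.single 0 (gen4 r .b), by rw [PhiL_single]; simp⟩
      | c => exact ⟨Finsupp.single 0 (gen4 r .c), by rw [PhiL_single]; simp⟩
      | d => exact ⟨Finsupp.single 0 (gen4 r .d), by rw [PhiL_single]; simp⟩
      | f =>
          refine ⟨Finsupp.single 1 1, ?_⟩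
          rw [PhiL_single, map_one, one_mul, zpow_one, Fu_val]
      | fi =>
          refine ⟨Finsupp.single (-1) 1, ?_⟩
          rw [PhiL_single, map_one, one_mul, zpow_neg_one, Fu_inv_val]
  | mul a b ha hb =>
      rw [map_mul]
      obtain ⟨p, hp⟩ := ha
      obtain ⟨q, hq⟩ := hb
      rw [← hp, ← hq]
      exact mul_mem_range r hs p q
  | add a b ha hb =>
      rw [map_add]
      exact add_mem ha hb

end Stmt14Aux



/-- `A_{r,s}` is isomorphic to the skew Laurent polynomial ring `GL_r(2)[f,f⁻¹;σ]`,
where `σ` is the algebra automorphism of `GL_r(2)` given by `σ(a) = a`, `σ(b) = s b`,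
`σ(c) = s⁻¹ c`, `σ(d) = d`.  Concretely: `GL_r(2)` embeds in `A_{r,s}`, the class of
`f` is a unit `F` satisfying the skew relation `f x = σ(x) f`, and the induced map
`⊕_{n ∈ ℤ} GL_r(2) f^n → A_{r,s}`, `Σ x_n f^n`, is a bijection. -/
theorem stmt14 (r s : ℂ) (hr : r ≠ 0) (hs : s ≠ 0) :
    ∃ σ : GL2 r ≃ₐ[ℂ] GL2 r,
      σ (gen4 r .a) = gen4 r .a ∧
      σ (gen4 r .b) = s • gen4 r .b ∧
      σ (gen4 r .c) = s⁻¹ • gen4 r .c ∧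
      σ (gen4 r .d) = gen4 r .d ∧
      ∃ j : GL2 r →ₐ[ℂ] Ars r s,
        j (gen4 r .a) = gen r s .a ∧
        j (gen4 r .b) = gen r s .b ∧
        j (gen4 r .c) = gen r s .c ∧
        j (gen4 r .d) = gen r s .d ∧
        ∃ F : (Ars r s)ˣ,
          (F : Ars r s) = gen r s .f ∧
          ((F⁻¹ : (Ars r s)ˣ) : Ars r s) = gen r s .fi ∧
          (∀ x : GL2 r, (F : Ars r s) * j x = j (σ x) * (F : Ars r s)) ∧
          Function.Bijective (fun p : ℤ →₀ GL2 r =>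
            p.sum fun n x => j x * ((F ^ n : (Ars r s)ˣ) : Ars r s)) := by
  classical
  refine ⟨Stmt14Aux.sigma r hs, Stmt14Aux.sigma_a r hs, Stmt14Aux.sigma_b r hs,
    Stmt14Aux.sigma_c r hs, Stmt14Aux.sigma_d r hs,
    Stmt14Aux.jmap r s, Stmt14Aux.jmap_a r s, Stmt14Aux.jmap_b r s, Stmt14Aux.jmap_c r s,
    Stmt14Aux.jmap_d r s,
    Stmt14Aux.Fu r s, rfl, rfl, fun x => Stmt14Aux.skew r hs x, ?_, ?_⟩
  · intro p q h
    apply Stmt14Aux.PhiL_injective r hs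
    rw [Stmt14Aux.PhiL_apply, Stmt14Aux.PhiL_apply]
    exact h
  · intro z
    obtain ⟨p, hp⟩ := Stmt14Aux.range_top r hs z
    refine ⟨p, ?_⟩
    rw [Stmt14Aux.PhiL_apply] at hp
    exact hp
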